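/- A gradual type S has a candidate codomain if and only if it has a least candidate codomain with respect to precision. Consequently the gradual codomain operator c̃od, defined to return this least candidate, is a well-defined partial function defined exactly on plausible function types. -/

import Mathlib

namespace GTFL

/-- Gradual types of GTFL⪍: `Int`, `Bool`, the unknown type `?`, arrow types,
record types `⟨l̄:S̄⟩`, and gradual row types `⟨l̄:S̄, ?⟩` (labels are naturals). -/
inductive GType : Type
  | int : GType
  | bool : GType
  | unk : GType
  | arrow : GType → GType → GType
  | record : List (Nat × GType) → GType
  | row : List (Nat × GType) → GType

/-- Static types are the gradual types that mention neither `?` nor gradual rows. -/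
inductive Static : GType → Prop
  | int : Static .int
  | bool : Static .bool
  | arrow {a b : GType} : Static a → Static b → Static (.arrow a b)
  | record {fs : List (Nat × GType)} :
      (∀ p ∈ fs, Static p.2) → Static (.record fs)

/-- Precision `S₁ ⊑ S₂` on gradual types: reflexive on base types, covariant for
arrows and records (pointwise), a record or gradual row whose fields extend those
of a gradual row (with precision on shared fields) is below that row, and every
type is below `?`. -/
inductive Prec : GType → GType → Prop
  | int : Prec .int .int
  | bool : Prec .bool .bool
  | arrow {a₁ b₁ a₂ b₂ : GType} :
      Prec a₁ a₂ → Prec b₁ b₂ → Prec (.arrow a₁ b₁) (.arrow a₂ b₂)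
  | record {fs₁ fs₂ : List (Nat × GType)} :
      fs₁.length = fs₂.length →
      (∀ pq ∈ List.zip fs₁ fs₂, pq.1.1 = pq.2.1) →
      (∀ pq ∈ List.zip fs₁ fs₂, Prec pq.1.2 pq.2.2) →
      Prec (.record fs₁) (.record fs₂)
  | recordRow {fs₁ fs₂ : List (Nat × GType)} :
      (∀ q ∈ fs₂, ∃ S, (q.1, S) ∈ fs₁) →
      (∀ q ∈ fs₂, ∀ p ∈ fs₁, p.1 = q.1 → Prec p.2 q.2) →
      Prec (.record fs₁) (.row fs₂)
  | rowRow {fs₁ fs₂ : List (Nat × GType)} :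
      (∀ q ∈ fs₂, ∃ S, (q.1, S) ∈ fs₁) →
      (∀ q ∈ fs₂, ∀ p ∈ fs₁, p.1 = q.1 → Prec p.2 q.2) →
      Prec (.row fs₁) (.row fs₂)
  | unk {S : GType} : Prec S .unk

/-- Static subtyping `T₁ <: T₂`: standard width/depth record subtyping with
contravariant arrow domains. -/
inductive Sub : GType → GType → Prop
  | int : Sub .int .int
  | bool : Sub .bool .bool
  | arrow {a₁ b₁ a₂ b₂ : GType} :
      Sub a₂ a₁ → Sub b₁ b₂ → Sub (.arrow a₁ b₁) (.arrow a₂ b₂)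
  | record {fs₁ fs₂ : List (Nat × GType)} :
      (∀ q ∈ fs₂, ∃ S, (q.1, S) ∈ fs₁) →
      (∀ q ∈ fs₂, ∀ p ∈ fs₁, p.1 = q.1 → Sub p.2 q.2) →
      Sub (.record fs₁) (.record fs₂)

/-- Consistent subtyping `S₁ ≲ S₂` of GTFL⪍. -/
inductive CSub : GType → GType → Prop
  | unkL {S : GType} : CSub .unk S
  | unkR {S : GType} : CSub S .unk
  | int : CSub .int .int
  | bool : CSub .bool .bool
  | arrow {a₁ b₁ a₂ b₂ : GType} :
      CSub a₂ a₁ → CSub b₁ b₂ → CSub (.arrow a₁ b₁) (.arrow a₂ b₂)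
  | recordRecord {fs₁ fs₂ : List (Nat × GType)} :
      (∀ q ∈ fs₂, ∃ S, (q.1, S) ∈ fs₁) →
      (∀ q ∈ fs₂, ∀ p ∈ fs₁, p.1 = q.1 → CSub p.2 q.2) →
      CSub (.record fs₁) (.record fs₂)
  | recordRow {fs₁ fs₂ : List (Nat × GType)} :
      (∀ q ∈ fs₂, ∃ S, (q.1, S) ∈ fs₁) →
      (∀ q ∈ fs₂, ∀ p ∈ fs₁, p.1 = q.1 → CSub p.2 q.2) →
      CSub (.record fs₁) (.row fs₂)
  | rowRecord {fs₁ fs₂ : List (Nat × GType)} :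
      (∀ q ∈ fs₂, ∀ p ∈ fs₁, p.1 = q.1 → CSub p.2 q.2) →
      CSub (.row fs₁) (.record fs₂)
  | rowRow {fs₁ fs₂ : List (Nat × GType)} :
      (∀ q ∈ fs₂, ∀ p ∈ fs₁, p.1 = q.1 → CSub p.2 q.2) →
      CSub (.row fs₁) (.row fs₂)

end GTFL

namespace GTFL

/-- A gradual type is a plausible function type if some static arrow type is below it. -/
def PlausibleFun (S : GType) : Prop :=
  ∃ T₁ T₂ : GType, Static T₁ ∧ Static T₂ ∧ Prec (.arrow T₁ T₂) S

/-- `S'` is a candidate codomain of a plausible function type `S` if every static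
arrow `T₁ → T₂ ⊑ S` has `T₂ ⊑ S'`. -/
def CandidateCod (S S' : GType) : Prop :=
  PlausibleFun S ∧
    ∀ T₁ T₂ : GType, Static T₁ → Static T₂ → Prec (.arrow T₁ T₂) S → Prec T₂ S'

/-!
A candidate codomain of `S` is exactly a `⊑`-upper bound of the set of static `T₂` with
`T₁ → T₂ ⊑ S` for a static `T₁`, and this set is nonempty iff `S` is plausible. So it suffices
that every nonempty set `X` of static types has a least upper bound. For `S = S₁ → S₂` this is
not simply `S₂`: for `S₂ = ⟨1 : ?, 1 : Int, ?⟩` the least candidate is `⟨1 : Int, ?⟩`, and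
`S₂ ⋢ ⟨1 : Int, ?⟩` because the field `1 : ?` of `S₂` is not below `Int`.

The least upper bound is built by recursion on the size of a member `w` of `X`. If two members
have different shapes, only `?` bounds both. Otherwise all members are `Int`, all `Bool`, all
arrows (take the arrow of the least upper bounds of the domains and of the codomains), or all
records: if they all carry the label sequence of `w`, take the record of positionwise least upper
bounds; if not, no record bounds them all, and we take the gradual row over the labels common to
all members, each with the least upper bound of the values found at that label.
-/

-- `⊑` is not a preorder, so Mathlib's `upperBounds` and `IsLUB` do not apply.
def IsPrecUB (X : Set GType) (L : GType) : Prop :=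
  ∀ T ∈ X, Prec T L

def IsPrecLUB (X : Set GType) (L : GType) : Prop :=
  IsPrecUB X L ∧ ∀ L', IsPrecUB X L' → Prec L L'

lemma isPrecLUB_unk {X : Set GType} (h : ∀ L, IsPrecUB X L → L = .unk) :
    IsPrecLUB X .unk :=
  ⟨fun _ _ => .unk, fun L hL => by rw [h L hL]; exact .unk⟩

lemma isPrecLUB_of_forall_eq {X : Set GType} {w : GType} (hw : w ∈ X)
    (hX : ∀ T ∈ X, T = w) (hww : Prec w w) : IsPrecLUB X w :=
  ⟨fun T hT => hX T hT ▸ hww, fun _ hL => hL w hw⟩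

lemma static_arrow_iff {a b : GType} : Static (.arrow a b) ↔ Static a ∧ Static b :=
  ⟨fun h => by cases h with | arrow ha hb => exact ⟨ha, hb⟩, fun h => .arrow h.1 h.2⟩

lemma static_record_iff {fs : List (Nat × GType)} :
    Static (.record fs) ↔ ∀ p ∈ fs, Static p.2 :=
  ⟨fun h => by cases h with | record h => exact h, .record⟩

lemma not_static_row {gs : List (Nat × GType)} : ¬ Static (.row gs) := nofun

lemma prec_arrow_arrow_iff {a b c d : GType} :
    Prec (.arrow a b) (.arrow c d) ↔ Prec a c ∧ Prec b d :=
  ⟨fun h => by cases h with | arrow h₁ h₂ => exact ⟨h₁, h₂⟩, fun h => .arrow h.1 h.2⟩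

lemma prec_record_row_iff {fs gs : List (Nat × GType)} :
    Prec (.record fs) (.row gs) ↔
      (∀ q ∈ gs, ∃ S, (q.1, S) ∈ fs) ∧ ∀ q ∈ gs, ∀ p ∈ fs, p.1 = q.1 → Prec p.2 q.2 :=
  ⟨fun h => by cases h with | recordRow h₁ h₂ => exact ⟨h₁, h₂⟩, fun h => .recordRow h.1 h.2⟩

lemma prec_record_record_iff {fs gs : List (Nat × GType)} :
    Prec (.record fs) (.record gs) ↔
      ∃ hlen : fs.length = gs.length,
        ∀ i (hi : i < fs.length), fs[i].1 = gs[i].1 ∧ Prec fs[i].2 gs[i].2 := by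
  constructor
  · rintro (_ | _ | _ | ⟨hlen, hlab, hval⟩)
    refine ⟨hlen, fun i hi => ?_⟩
    have hmem : (fs[i], gs[i]) ∈ fs.zip gs := by
      have hi' : i < (fs.zip gs).length := by simp; omega
      simpa using List.getElem_mem hi'
    exact ⟨hlab _ hmem, hval _ hmem⟩
  · rintro ⟨hlen, h⟩
    have hzip : ∀ pq ∈ fs.zip gs, pq.1.1 = pq.2.1 ∧ Prec pq.1.2 pq.2.2 := by
      intro pq hpq
      obtain ⟨i, hi, rfl⟩ := List.mem_iff_getElem.1 hpq
      simpa using h i (by simp at hi; omega)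
    exact .record hlen (fun pq h => (hzip pq h).1) (fun pq h => (hzip pq h).2)

lemma map_fst_eq_of_prec_record {fs gs : List (Nat × GType)}
    (h : Prec (.record fs) (.record gs)) : fs.map Prod.fst = gs.map Prod.fst := by
  obtain ⟨hlen, h⟩ := prec_record_record_iff.1 h
  exact List.ext_getElem (by simpa using hlen) fun i hi _ => by
    simpa using (h i (by simpa using hi)).1

lemma record_prec_cases {fs : List (Nat × GType)} {L : GType} (h : Prec (.record fs) L) :
    (∃ gs, L = .record gs) ∨ (∃ gs, L = .row gs) ∨ L = .unk := by
  cases h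
  · exact .inl ⟨_, rfl⟩
  · exact .inr (.inl ⟨_, rfl⟩)
  · exact .inr (.inr rfl)

def SameShape : GType → GType → Prop
  | .int, .int | .bool, .bool | .arrow _ _, .arrow _ _ | .record _, .record _ => True
  | _, _ => False

lemma eq_unk_of_prec_of_not_sameShape {T T' L : GType} (hT : Static T) (hT' : Static T')
    (h : Prec T L) (h' : Prec T' L) (hs : ¬ SameShape T T') : L = .unk := by
  cases h <;> cases h' <;>
    first
    | rfl
    | exact (hs trivial).elim
    | exact (not_static_row hT).elim
    | exact (not_static_row hT').elim

lemma SameShape.eq_int {T : GType} (h : SameShape T .int) : T = .int := by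
  cases T <;> simp_all [SameShape]

lemma SameShape.eq_bool {T : GType} (h : SameShape T .bool) : T = .bool := by
  cases T <;> simp_all [SameShape]

lemma SameShape.exists_arrow {T a b : GType} (h : SameShape T (.arrow a b)) :
    ∃ a' b', T = .arrow a' b' := by
  cases T <;> simp_all [SameShape]

lemma SameShape.exists_record {T : GType} {ws : List (Nat × GType)}
    (h : SameShape T (.record ws)) : ∃ fs, T = .record fs := by
  cases T <;> simp_all [SameShape]

def arrowDoms (X : Set GType) : Set GType := {a | ∃ b, .arrow a b ∈ X}

def arrowCods (X : Set GType) : Set GType := {b | ∃ a, .arrow a b ∈ X}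

lemma isPrecLUB_arrow {X : Set GType} {a b La Lb : GType} (hab : .arrow a b ∈ X)
    (hX : ∀ T ∈ X, ∃ a' b', T = .arrow a' b')
    (hLa : IsPrecLUB (arrowDoms X) La) (hLb : IsPrecLUB (arrowCods X) Lb) :
    IsPrecLUB X (.arrow La Lb) := by
  refine ⟨fun T hT => ?_, fun L hL => ?_⟩
  · obtain ⟨a', b', rfl⟩ := hX T hT
    exact .arrow (hLa.1 a' ⟨b', hT⟩) (hLb.1 b' ⟨a', hT⟩)
  · cases hL _ hab with
    | @arrow _ _ c d _ _ =>
      exact .arrow (hLa.2 c fun a' ⟨_, h⟩ => (prec_arrow_arrow_iff.1 (hL _ h)).1)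
        (hLb.2 d fun b' ⟨_, h⟩ => (prec_arrow_arrow_iff.1 (hL _ h)).2)
    | unk => exact .unk

def recordFieldsAt (X : Set GType) (j : Nat) : Set GType :=
  {T | ∃ fs, .record fs ∈ X ∧ ∃ hj : j < fs.length, fs[j].2 = T}

lemma isPrecLUB_record {X : Set GType} {ws : List (Nat × GType)} {f : Nat → GType}
    (hws : .record ws ∈ X)
    (hX : ∀ T ∈ X, ∃ fs, T = .record fs ∧ fs.map Prod.fst = ws.map Prod.fst)
    (hf : ∀ j < ws.length, IsPrecLUB (recordFieldsAt X j) (f j)) :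
    IsPrecLUB X (.record (ws.mapIdx fun j p => (p.1, f j))) := by
  have hlab : ∀ fs, .record fs ∈ X → ∀ i (hi : i < fs.length), ∃ hi' : i < ws.length,
      fs[i].1 = ws[i].1 := by
    intro fs hfs i hi
    obtain ⟨fs', hfs', hlab⟩ := hX _ hfs
    cases hfs'
    have hlen : fs.length = ws.length := by simpa using congrArg List.length hlab
    have hi' : i < ws.length := hlen ▸ hi
    have hget := congrArg (·[i]?) hlab
    simp only [List.getElem?_map, List.getElem?_eq_getElem hi, List.getElem?_eq_getElem hi',
      Option.map_some, Option.some.injEq] at hget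
    exact ⟨hi', hget⟩
  refine ⟨fun T hT => ?_, fun L hL => ?_⟩
  · obtain ⟨fs, rfl, hfs⟩ := hX T hT
    refine prec_record_record_iff.2 ⟨by simpa using congrArg List.length hfs, fun i hi => ?_⟩
    obtain ⟨hi', hlabi⟩ := hlab fs hT i hi
    simpa [hlabi] using (hf i hi').1 _ ⟨fs, hT, hi, rfl⟩
  · rcases record_prec_cases (hL _ hws) with ⟨gs, rfl⟩ | ⟨gs, rfl⟩ | rfl
    · obtain ⟨hlen, hpos⟩ := prec_record_record_iff.1 (hL _ hws)
      refine prec_record_record_iff.2 ⟨by simpa using hlen, fun i hi => ?_⟩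
      have hi' : i < ws.length := by simpa using hi
      simp only [List.getElem_mapIdx]
      refine ⟨(hpos i hi').1, (hf i hi').2 _ fun T ⟨fs, hfs, hj, hT⟩ => ?_⟩
      exact hT ▸ ((prec_record_record_iff.1 (hL _ hfs)).2 i hj).2
    · obtain ⟨hex, -⟩ := prec_record_row_iff.1 (hL _ hws)
      refine prec_record_row_iff.2 ⟨fun q hq => ?_, fun q hq p hp hpq => ?_⟩
      · obtain ⟨S, hS⟩ := hex q hq
        obtain ⟨i, hi, hwi⟩ := List.mem_iff_getElem.1 hS
        exact ⟨f i, List.mem_mapIdx.2 ⟨i, hi, by simp [hwi]⟩⟩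
      · obtain ⟨i, hi, rfl⟩ := List.mem_mapIdx.1 hp
        refine (hf i hi).2 _ fun T ⟨fs, hfs, hj, hT⟩ => ?_
        obtain ⟨_, hlabi⟩ := hlab fs hfs i hj
        exact hT ▸ (prec_record_row_iff.1 (hL _ hfs)).2 q hq _ (List.getElem_mem hj)
          (hlabi.trans hpq)
    · exact .unk

def IsCommonLabel (X : Set GType) (l : Nat) : Prop :=
  ∀ fs, .record fs ∈ X → ∃ S, (l, S) ∈ fs

def recordLabelValues (X : Set GType) (l : Nat) : Set GType :=
  {T | ∃ fs, .record fs ∈ X ∧ (l, T) ∈ fs}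

lemma isPrecLUB_row {X : Set GType} {ws : List (Nat × GType)} {ls : List Nat}
    {f : Nat → GType} (hws : .record ws ∈ X) (hX : ∀ T ∈ X, ∃ fs, T = .record fs)
    (hlabels : ∃ fs, .record fs ∈ X ∧ fs.map Prod.fst ≠ ws.map Prod.fst)
    (hls : ∀ l, l ∈ ls ↔ IsCommonLabel X l)
    (hf : ∀ l ∈ ls, IsPrecLUB (recordLabelValues X l) (f l)) :
    IsPrecLUB X (.row (ls.map fun l => (l, f l))) := by
  refine ⟨fun T hT => ?_, fun L hL => ?_⟩
  · obtain ⟨fs, rfl⟩ := hX T hT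
    refine prec_record_row_iff.2 ⟨fun q hq => ?_, fun q hq p hp hpq => ?_⟩
    · obtain ⟨l, hl, rfl⟩ := List.mem_map.1 hq
      exact (hls l).1 hl fs hT
    · obtain ⟨l, hl, rfl⟩ := List.mem_map.1 hq
      obtain ⟨l', S⟩ := p
      cases hpq
      exact (hf l hl).1 S ⟨fs, hT, hp⟩
  · rcases record_prec_cases (hL _ hws) with ⟨gs, rfl⟩ | ⟨gs, rfl⟩ | rfl
    · obtain ⟨fs, hfs, hne⟩ := hlabels
      exact (hne ((map_fst_eq_of_prec_record (hL _ hfs)).trans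
        (map_fst_eq_of_prec_record (hL _ hws)).symm)).elim
    · refine .rowRow (fun q hq => ?_) (fun q hq p hp hpq => ?_)
      · have hq' : q.1 ∈ ls :=
          (hls _).2 fun fs hfs => (prec_record_row_iff.1 (hL _ hfs)).1 q hq
        exact ⟨f q.1, List.mem_map.2 ⟨q.1, hq', rfl⟩⟩
      · obtain ⟨l, hl, rfl⟩ := List.mem_map.1 hp
        exact (hf l hl).2 _ fun T ⟨fs, hfs, hT⟩ =>
          (prec_record_row_iff.1 (hL _ hfs)).2 q hq _ hT hpq
    · exact .unk

lemma sizeOf_snd_lt_sizeOf_record {p : Nat × GType} {fs : List (Nat × GType)} (h : p ∈ fs) :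
    sizeOf p.2 < sizeOf (GType.record fs) := by
  have := List.sizeOf_lt_of_mem h
  obtain ⟨l, S⟩ := p
  simp only [GType.record.sizeOf_spec, Prod.mk.sizeOf_spec] at this ⊢
  omega

lemma exists_isPrecLUB_of_record_mem {X : Set GType} {ws : List (Nat × GType)}
    (hX : ∀ T ∈ X, Static T) (hws : .record ws ∈ X) (hXrecord : ∀ T ∈ X, ∃ fs, T = .record fs)
    (ih : ∀ X' : Set GType, (∀ T ∈ X', Static T) → ∀ p ∈ ws, p.2 ∈ X' → ∃ L, IsPrecLUB X' L) :
    ∃ L, IsPrecLUB X L := by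
  have hfields : ∀ fs, .record fs ∈ X → ∀ p ∈ fs, Static p.2 :=
    fun fs hfs => static_record_iff.1 (hX _ hfs)
  by_cases hsame : ∀ T ∈ X, ∃ fs, T = .record fs ∧ fs.map Prod.fst = ws.map Prod.fst
  · have hfieldLUB : ∀ j, ∃ L, j < ws.length → IsPrecLUB (recordFieldsAt X j) L := by
      intro j
      by_cases hj : j < ws.length
      · obtain ⟨L, hL⟩ := ih (recordFieldsAt X j)
          (fun _ ⟨fs, hfs, hk, hT⟩ => hT ▸ hfields fs hfs _ (List.getElem_mem hk))
          ws[j] (List.getElem_mem hj) ⟨ws, hws, hj, rfl⟩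
        exact ⟨L, fun _ => hL⟩
      · exact ⟨.unk, fun h => absurd h hj⟩
    choose f hf using hfieldLUB
    exact ⟨_, isPrecLUB_record hws hsame hf⟩
  · push Not at hsame
    obtain ⟨T, hT, hne⟩ := hsame
    obtain ⟨fs, rfl⟩ := hXrecord T hT
    have hlabelLUB : ∀ l, ∃ L, IsCommonLabel X l → IsPrecLUB (recordLabelValues X l) L := by
      intro l
      by_cases hl : IsCommonLabel X l
      · obtain ⟨S, hS⟩ := hl ws hws
        obtain ⟨L, hL⟩ := ih (recordLabelValues X l)
          (fun _ ⟨fs, hfs, hT⟩ => hfields fs hfs _ hT) (l, S) hS ⟨ws, hws, hS⟩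
        exact ⟨L, fun _ => hL⟩
      · exact ⟨.unk, fun h => absurd h hl⟩
    choose f hf using hlabelLUB
    classical
    have hls : ∀ l, l ∈ (ws.map Prod.fst).filter (IsCommonLabel X ·) ↔ IsCommonLabel X l := by
      intro l
      simp only [List.mem_filter, List.mem_map, decide_eq_true_eq, and_iff_right_iff_imp]
      intro hl
      obtain ⟨S, hS⟩ := hl ws hws
      exact ⟨_, hS, rfl⟩
    exact ⟨_, isPrecLUB_row hws hXrecord ⟨fs, hT, hne fs rfl⟩ hls
      fun l hl => hf l ((hls l).1 hl)⟩

theorem exists_isPrecLUB_of_mem {X : Set GType} (hX : ∀ T ∈ X, Static T) (w : GType)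
    (hw : w ∈ X) : ∃ L, IsPrecLUB X L := by
  by_cases hshape : ∀ T ∈ X, SameShape T w
  swap
  · push Not at hshape
    obtain ⟨T, hT, hTw⟩ := hshape
    exact ⟨.unk, isPrecLUB_unk fun L hL =>
      eq_unk_of_prec_of_not_sameShape (hX T hT) (hX w hw) (hL T hT) (hL w hw) hTw⟩
  match w, hX w hw with
  | .int, _ => exact ⟨.int, isPrecLUB_of_forall_eq hw (fun T hT => (hshape T hT).eq_int) .int⟩
  | .bool, _ =>
    exact ⟨.bool, isPrecLUB_of_forall_eq hw (fun T hT => (hshape T hT).eq_bool) .bool⟩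
  | .arrow a b, _ =>
    obtain ⟨La, hLa⟩ := exists_isPrecLUB_of_mem (X := arrowDoms X)
      (fun _ ⟨_, h⟩ => (static_arrow_iff.1 (hX _ h)).1) a ⟨b, hw⟩
    obtain ⟨Lb, hLb⟩ := exists_isPrecLUB_of_mem (X := arrowCods X)
      (fun _ ⟨_, h⟩ => (static_arrow_iff.1 (hX _ h)).2) b ⟨a, hw⟩
    exact ⟨_, isPrecLUB_arrow hw (fun T hT => (hshape T hT).exists_arrow) hLa hLb⟩
  | .record ws, _ =>
    exact exists_isPrecLUB_of_record_mem hX hw (fun T hT => (hshape T hT).exists_record)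
      fun X' hX' p hp hpX' => exists_isPrecLUB_of_mem hX' p.2 hpX'
termination_by sizeOf w
decreasing_by
  · simp only [GType.arrow.sizeOf_spec]; omega
  · simp only [GType.arrow.sizeOf_spec]; omega
  · exact sizeOf_snd_lt_sizeOf_record hp

def staticCods (S : GType) : Set GType :=
  {T₂ | ∃ T₁, Static T₁ ∧ Static T₂ ∧ Prec (.arrow T₁ T₂) S}

lemma plausibleFun_iff_staticCods_nonempty {S : GType} :
    PlausibleFun S ↔ (staticCods S).Nonempty :=
  ⟨fun ⟨T₁, T₂, h₁, h₂, h⟩ => ⟨T₂, T₁, h₁, h₂, h⟩, fun ⟨T₂, T₁, h₁, h₂, h⟩ => ⟨T₁, T₂, h₁, h₂, h⟩⟩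

lemma candidateCod_iff {S S' : GType} :
    CandidateCod S S' ↔ PlausibleFun S ∧ IsPrecUB (staticCods S) S' :=
  ⟨fun ⟨hS, h⟩ => ⟨hS, fun T₂ ⟨T₁, h₁, h₂, hT⟩ => h T₁ T₂ h₁ h₂ hT⟩,
    fun ⟨hS, h⟩ => ⟨hS, fun T₁ T₂ h₁ h₂ hT => h T₂ ⟨T₁, h₁, h₂, hT⟩⟩⟩

theorem exists_least_candidateCod {S : GType} (hS : PlausibleFun S) :
    ∃ S', CandidateCod S S' ∧ ∀ S'', CandidateCod S S'' → Prec S' S'' := by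
  obtain ⟨T₂, hT₂⟩ := plausibleFun_iff_staticCods_nonempty.1 hS
  obtain ⟨L, hub, hleast⟩ := exists_isPrecLUB_of_mem (X := staticCods S)
    (fun _ ⟨_, _, h, _⟩ => h) T₂ hT₂
  exact ⟨L, candidateCod_iff.2 ⟨hS, hub⟩, fun S'' h => hleast S'' (candidateCod_iff.1 h).2⟩

/-- A gradual type has a candidate codomain iff it has a ⊑-least
candidate codomain; hence the gradual codomain operator (returning the least
candidate) is a well-defined partial function defined exactly on the plausible
function types. -/
theorem candidate_cod_iff_least_candidate_cod :
    ∀ S : GType,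
      ((∃ S', CandidateCod S S') ↔
        (∃ S', CandidateCod S S' ∧ ∀ S'', CandidateCod S S'' → Prec S' S'')) ∧
      ((∃ S', CandidateCod S S') ↔ PlausibleFun S) := by
  intro S
  refine ⟨⟨fun ⟨_, h⟩ => exists_least_candidateCod h.1, fun ⟨S', h, _⟩ => ⟨S', h⟩⟩,
    ⟨fun ⟨_, h⟩ => h.1, fun h => ?_⟩⟩
  obtain ⟨S', h, -⟩ := exists_least_candidateCod h
  exact ⟨S', h⟩

end GTFL
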